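/- arXiv:2102.00152 — 3 statements merged into one kernel-verified Lean document; each statement's English description precedes it below -/
import Mathlib

section
/- Let μ be a belief on a nonempty finite set S, let u : X → ℝ, let δ ∈ [0,1], and for each event E with μ(E) > 0 define μ_E(s) = δ·μ(s) + (1−δ)·B(μ,E)(s). Then for all events A, B, C with μ(A) > 0, μ(B) > 0, μ(C) > 0 and C ∩ (A ∪ B) = ∅, every act f, and every consequence y: ∑_{s∈S} u((fCy)(s))·μ_A(s) = ∑_{s∈S} u((fCy)(s))·μ_B(s). In particular, for every z ∈ X, ∑_{s∈S} u((fCy)(s))·μ_A(s) ≥ u(z) if and only if ∑_{s∈S} u((fCy)(s))·μ_B(s) ≥ u(z). (Direction (ii)⇒(i) of Proposition 1: a constant degree of conservatism implies Weak Consequentialism.) -/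
open Finset

noncomputable def bayes {S : Type*} [DecidableEq S] (μ : S → ℝ) (A : Finset S) : S → ℝ :=
  fun s => if s ∈ A then μ s / ∑ t ∈ A, μ t else 0

def splice {S X : Type*} [DecidableEq S] (f g : S → X) (A : Finset S) : S → X :=
  fun s => if s ∈ A then f s else g s

/-! The act `fCy` is constantly `y` on any event `E` disjoint from `C`, so the Bayesian
component of `μ_E` values it at `u y` whatever `E` is. Hence its expected utility under
`μ_E = δ μ + (1 - δ) B(μ, E)` is `δ · 𝔼_μ[u ∘ fCy] + (1 - δ) · u y`, independent of `E`. -/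

section Bayes

variable {S : Type*} [Fintype S] [DecidableEq S]

theorem sum_mul_bayes (μ g : S → ℝ) (A : Finset S) :
    ∑ s, g s * bayes μ A s = (∑ s ∈ A, g s * μ s) / ∑ s ∈ A, μ s := by
  simp only [bayes, mul_ite, mul_zero, sum_ite_mem, univ_inter, sum_div, mul_div_assoc]

theorem sum_mul_bayes_of_eqOn_const (μ g : S → ℝ) {A : Finset S} (hA : ∑ s ∈ A, μ s ≠ 0)
    {c : ℝ} (hg : ∀ s ∈ A, g s = c) :
    ∑ s, g s * bayes μ A s = c := by
  rw [sum_mul_bayes, sum_congr rfl fun s hs => by rw [hg s hs], ← mul_sum,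
    mul_div_cancel_right₀ _ hA]

theorem sum_mul_mixture_bayes (μ g : S → ℝ) (δ : ℝ) (A : Finset S) :
    ∑ s, g s * (δ * μ s + (1 - δ) * bayes μ A s) =
      δ * ∑ s, g s * μ s + (1 - δ) * ∑ s, g s * bayes μ A s := by
  simp only [mul_add, sum_add_distrib, mul_sum]
  congr 1 <;> exact sum_congr rfl fun s _ => by ring

theorem sum_splice_mul_mixture_bayes_of_disjoint {X : Type*} (μ : S → ℝ) (u : X → ℝ) (δ : ℝ)
    {A C : Finset S} (hA : ∑ s ∈ A, μ s ≠ 0) (hAC : Disjoint A C) (f : S → X) (y : X) :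
    ∑ s, u (splice f (fun _ => y) C s) * (δ * μ s + (1 - δ) * bayes μ A s) =
      δ * ∑ s, u (splice f (fun _ => y) C s) * μ s + (1 - δ) * u y := by
  rw [sum_mul_mixture_bayes, sum_mul_bayes_of_eqOn_const μ _ hA fun s hs => ?_]
  simp [splice, disjoint_left.1 hAC hs]

end Bayes

theorem stmt7_general {S X : Type*} [Fintype S] [DecidableEq S]
    (μ : S → ℝ)
    (u : X → ℝ)
    (δ : ℝ)
    (A B C : Finset S)
    (hA : 0 < ∑ s ∈ A, μ s) (hB : 0 < ∑ s ∈ B, μ s)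
    (hdisj : C ∩ (A ∪ B) = ∅)
    (f : S → X) (y : X) :
    (∑ s, u (splice f (fun _ => y) C s) * (δ * μ s + (1 - δ) * bayes μ A s) =
     ∑ s, u (splice f (fun _ => y) C s) * (δ * μ s + (1 - δ) * bayes μ B s)) ∧
    (∀ z : X,
      (∑ s, u (splice f (fun _ => y) C s) * (δ * μ s + (1 - δ) * bayes μ A s) ≥ u z) ↔
      (∑ s, u (splice f (fun _ => y) C s) * (δ * μ s + (1 - δ) * bayes μ B s) ≥ u z)) := by
  obtain ⟨hCA, hCB⟩ := disjoint_union_right.1 (disjoint_iff_inter_eq_empty.2 hdisj)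
  have heq := (sum_splice_mul_mixture_bayes_of_disjoint μ u δ hA.ne' hCA.symm f y).trans
    (sum_splice_mul_mixture_bayes_of_disjoint μ u δ hB.ne' hCB.symm f y).symm
  exact ⟨heq, fun z => by rw [heq]⟩

/-- Direction (ii) ⇒ (i) of Proposition 1: a constant degree of conservatism
implies Weak Consequentialism. -/
theorem stmt7 {S X : Type*} [Fintype S] [DecidableEq S] [Nonempty S]
    (μ : S → ℝ) (hμ0 : ∀ s, 0 ≤ μ s) (hμ1 : ∑ s, μ s = 1)
    (u : X → ℝ)
    (δ : ℝ) (hδ : δ ∈ Set.Icc (0:ℝ) 1)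
    (A B C : Finset S)
    (hA : 0 < ∑ s ∈ A, μ s) (hB : 0 < ∑ s ∈ B, μ s) (hC : 0 < ∑ s ∈ C, μ s)
    (hdisj : C ∩ (A ∪ B) = ∅)
    (f : S → X) (y : X) :
    (∑ s, u (splice f (fun _ => y) C s) * (δ * μ s + (1 - δ) * bayes μ A s) =
     ∑ s, u (splice f (fun _ => y) C s) * (δ * μ s + (1 - δ) * bayes μ B s)) ∧
    (∀ z : X,
      (∑ s, u (splice f (fun _ => y) C s) * (δ * μ s + (1 - δ) * bayes μ A s) ≥ u z) ↔
      (∑ s, u (splice f (fun _ => y) C s) * (δ * μ s + (1 - δ) * bayes μ B s) ≥ u z)) :=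
  stmt7_general μ u δ A B C hA hB hdisj f y
end

section
/- Let μ₁, μ₂ be beliefs on a nonempty finite set S, let u : X → ℝ with [−1,1] contained in the range of u, let A ⊆ S satisfy 0 < μ₁(A) < 1 and 0 < μ₂(A) < 1, let δ₁, δ₂ ∈ [0,1], and set μ¹_A = δ₁·μ₁ + (1−δ₁)·B(μ₁,A) and μ²_A = δ₂·μ₂ + (1−δ₂)·B(μ₂,A). Then the following are equivalent: (i) for all x, y₁, y₂ ∈ X with u(x), u(y₁), u(y₂) ∈ [−1,1], u(x) > u(y₁), u(x) > u(y₂), and such that for every z ∈ X, ∑_{s∈S} u((xAy₁)(s))μ₁(s) ≥ u(z) iff ∑_{s∈S} u((xAy₂)(s))μ₂(s) ≥ u(z), it holds that for every z ∈ X, ∑_{s∈S} u((xAy₁)(s))μ¹_A(s) ≥ u(z) implies ∑_{s∈S} u((xAy₂)(s))μ²_A(s) ≥ u(z); (ii) δ₁ ≥ δ₂. (Proposition 3: agent 1 is more conservative than agent 2 at A if and only if δ₁(A) ≥ δ₂(A).) -/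
/-!
Under the mixture `δ μ + (1 - δ) B(μ, A)` the act `xAy` has expected utility
`u x - δ (1 - μ(A)) (u x - u y)`, and under `μ` itself `u x - (1 - μ(A)) (u x - u y)`.
Since these values lie in `[-1, 1] ⊆ range u`, the premise of (i) says exactly that the two
agents' shortfalls `c = (1 - μᵢ(A)) (u x - u yᵢ) > 0` coincide, and the conclusion then says
`δ₂ c ≤ δ₁ c`. Conversely, `u x = 1` and `c = min (1 - μ₁(A)) (1 - μ₂(A))` give a common
shortfall, and testing the conclusion at `u z = 1 - δ₁ c` yields `δ₂ ≤ δ₁`.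
-/

open Finset

section RangeOrder

variable {X α : Type*} [PartialOrder α] {u : X → α} {a b : α}

lemma eq_of_forall_le_iff_of_mem_range (ha : a ∈ Set.range u) (hb : b ∈ Set.range u)
    (h : ∀ z, u z ≤ a ↔ u z ≤ b) : a = b := by
  obtain ⟨za, rfl⟩ := ha
  obtain ⟨zb, rfl⟩ := hb
  exact le_antisymm ((h za).1 le_rfl) ((h zb).2 le_rfl)

lemma forall_le_imp_le_iff_of_mem_range (ha : a ∈ Set.range u) :
    (∀ z, u z ≤ a → u z ≤ b) ↔ a ≤ b := by
  obtain ⟨za, rfl⟩ := ha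
  exact ⟨fun h => h za le_rfl, fun hab z hz => hz.trans hab⟩

end RangeOrder

lemma sub_mul_sub_mem_Icc {lo hi a b p : ℝ} (ha : a ∈ Set.Icc lo hi) (hb : b ∈ Set.Icc lo hi)
    (hp0 : 0 ≤ p) (hp1 : p ≤ 1) : a - (1 - p) * (a - b) ∈ Set.Icc lo hi := by
  have h := convex_Icc lo hi ha hb hp0 (sub_nonneg.2 hp1) (add_sub_cancel p 1)
  simp only [smul_eq_mul] at h
  convert h using 1
  ring

lemma sum_bayes_of_pos {S : Type*} [DecidableEq S] (μ : S → ℝ) (A : Finset S)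
    (hA : 0 < ∑ s ∈ A, μ s) :
    ∑ s ∈ A, bayes μ A s = 1 := by
  rw [← div_self hA.ne', sum_div]
  exact sum_congr rfl fun s hs => by simp [bayes, hs]

section Splice

variable {S X : Type*} [Fintype S] [DecidableEq S]

lemma sum_compl_bayes (μ : S → ℝ) (A : Finset S) : ∑ s ∈ Aᶜ, bayes μ A s = 0 :=
  sum_eq_zero fun s hs => by simp [bayes, mem_compl.mp hs]

lemma sum_splice_const_mul (u : X → ℝ) (x y : X) (A : Finset S) (ν : S → ℝ) :
    ∑ s, u (splice (fun _ => x) (fun _ => y) A s) * ν s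
      = (∑ s ∈ A, ν s) * u x + (∑ s ∈ Aᶜ, ν s) * u y := by
  rw [← sum_add_sum_compl A, sum_mul, sum_mul]
  congr 1
  · exact sum_congr rfl fun s hs => by simp [splice, hs, mul_comm]
  · exact sum_congr rfl fun s hs => by simp [splice, mem_compl.mp hs, mul_comm]

lemma sum_compl_eq_one_sub {μ : S → ℝ} (hμ : ∑ s, μ s = 1) (A : Finset S) :
    ∑ s ∈ Aᶜ, μ s = 1 - ∑ s ∈ A, μ s := by
  rw [← hμ, ← sum_add_sum_compl A μ, add_sub_cancel_left]

lemma sum_splice_const_mul_of_sum_eq_one {μ : S → ℝ} (hμ : ∑ s, μ s = 1)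
    (u : X → ℝ) (x y : X) (A : Finset S) :
    ∑ s, u (splice (fun _ => x) (fun _ => y) A s) * μ s
      = u x - (1 - ∑ s ∈ A, μ s) * (u x - u y) := by
  rw [sum_splice_const_mul, sum_compl_eq_one_sub hμ]
  ring

lemma sum_splice_const_mul_mix_bayes {μ : S → ℝ} (hμ : ∑ s, μ s = 1) {A : Finset S}
    (hA : 0 < ∑ s ∈ A, μ s) (u : X → ℝ) (x y : X) (δ : ℝ) :
    ∑ s, u (splice (fun _ => x) (fun _ => y) A s) * (δ * μ s + (1 - δ) * bayes μ A s)
      = u x - δ * ((1 - ∑ s ∈ A, μ s) * (u x - u y)) := by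
  rw [sum_splice_const_mul, sum_add_distrib, sum_add_distrib, ← mul_sum, ← mul_sum,
    ← mul_sum, ← mul_sum, sum_bayes_of_pos μ A hA, sum_compl_bayes, sum_compl_eq_one_sub hμ]
  ring

end Splice

section Shortfall

variable {X : Type*} {u : X → ℝ} {p q δ₁ δ₂ : ℝ}

lemma le_of_forall_shortfall (hu : Set.Icc (-1 : ℝ) 1 ⊆ Set.range u)
    (hp0 : 0 ≤ p) (hp1 : p < 1) (hq0 : 0 ≤ q) (hq1 : q < 1) (hδ₁ : δ₁ ∈ Set.Icc (0 : ℝ) 1)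
    (h : ∀ x y₁ y₂ : X,
      u x ∈ Set.Icc (-1 : ℝ) 1 → u y₁ ∈ Set.Icc (-1 : ℝ) 1 → u y₂ ∈ Set.Icc (-1 : ℝ) 1 →
      u y₁ < u x → u y₂ < u x →
      (∀ z, u x - (1 - p) * (u x - u y₁) ≥ u z ↔ u x - (1 - q) * (u x - u y₂) ≥ u z) →
      ∀ z, u x - δ₁ * ((1 - p) * (u x - u y₁)) ≥ u z →
        u x - δ₂ * ((1 - q) * (u x - u y₂)) ≥ u z) :
    δ₂ ≤ δ₁ := by
  set c := min (1 - p) (1 - q)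
  have hc : 0 < c := lt_min (by linarith) (by linarith)
  obtain ⟨x, hx⟩ := hu (show (1 : ℝ) ∈ Set.Icc (-1) 1 from ⟨by norm_num, le_rfl⟩)
  -- `yᵢ` with utility `1 - c / (1 - pᵢ)`, so that both shortfalls are `c`
  have witness : ∀ r, 0 ≤ r → c ≤ 1 - r → ∃ y, u y ∈ Set.Icc (-1 : ℝ) 1 ∧ u y < u x ∧
      (1 - r) * (u x - u y) = c := by
    intro r hr0 hcr
    have hr : 0 < 1 - r := hc.trans_le hcr
    have hcr' : c / (1 - r) ≤ 1 := (div_le_one hr).2 hcr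
    have hcr0 : 0 < c / (1 - r) := div_pos hc hr
    obtain ⟨y, hy⟩ := hu (show 1 - c / (1 - r) ∈ Set.Icc (-1 : ℝ) 1 from
      ⟨by linarith, by linarith⟩)
    refine ⟨y, hy ▸ ⟨by linarith, by linarith⟩, by linarith, ?_⟩
    rw [hx, hy]
    field_simp
    ring
  obtain ⟨y₁, hy₁, hy₁x, hc₁⟩ := witness p hp0 (min_le_left _ _)
  obtain ⟨y₂, hy₂, hy₂x, hc₂⟩ := witness q hq0 (min_le_right _ _)
  have hc1 : c ≤ 1 := (min_le_left _ _).trans (by linarith)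
  have hδc : u x - δ₁ * c ∈ Set.range u := by
    rw [hx]
    exact hu ⟨by nlinarith [hδ₁.2], by nlinarith [hδ₁.1]⟩
  have key := h x y₁ y₂ (by rw [hx]; norm_num) hy₁ hy₂ hy₁x hy₂x
    (fun z => by rw [hc₁, hc₂])
  rw [hc₁, hc₂] at key
  have hle := (forall_le_imp_le_iff_of_mem_range hδc).1 key
  exact le_of_mul_le_mul_right (by linarith) hc

lemma forall_shortfall_of_le (hu : Set.Icc (-1 : ℝ) 1 ⊆ Set.range u)
    (hp0 : 0 ≤ p) (hp1 : p < 1) (hq0 : 0 ≤ q) (hq1 : q < 1) (hδ : δ₂ ≤ δ₁) :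
    ∀ x y₁ y₂ : X,
      u x ∈ Set.Icc (-1 : ℝ) 1 → u y₁ ∈ Set.Icc (-1 : ℝ) 1 → u y₂ ∈ Set.Icc (-1 : ℝ) 1 →
      u y₁ < u x → u y₂ < u x →
      (∀ z, u x - (1 - p) * (u x - u y₁) ≥ u z ↔ u x - (1 - q) * (u x - u y₂) ≥ u z) →
      ∀ z, u x - δ₁ * ((1 - p) * (u x - u y₁)) ≥ u z →
        u x - δ₂ * ((1 - q) * (u x - u y₂)) ≥ u z := by
  intro x y₁ y₂ hx hy₁ hy₂ hy₁x hy₂x hiff z hz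
  have hshort : (1 - p) * (u x - u y₁) = (1 - q) * (u x - u y₂) := by
    have := eq_of_forall_le_iff_of_mem_range
      (hu (sub_mul_sub_mem_Icc hx hy₁ hp0 hp1.le)) (hu (sub_mul_sub_mem_Icc hx hy₂ hq0 hq1.le))
      hiff
    linarith
  have hpos : 0 < (1 - p) * (u x - u y₁) := mul_pos (by linarith) (by linarith)
  calc u z ≤ u x - δ₁ * ((1 - p) * (u x - u y₁)) := hz
    _ ≤ u x - δ₂ * ((1 - p) * (u x - u y₁)) := by gcongr
    _ = u x - δ₂ * ((1 - q) * (u x - u y₂)) := by rw [hshort]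

end Shortfall

theorem stmt12_general {S X : Type*} [Fintype S] [DecidableEq S]
    (μ₁ μ₂ : S → ℝ)
    (hμ₁1 : ∑ s, μ₁ s = 1)
    (hμ₂1 : ∑ s, μ₂ s = 1)
    (u : X → ℝ) (hu : Set.Icc (-1:ℝ) 1 ⊆ Set.range u)
    (A : Finset S)
    (hA₁0 : 0 < ∑ s ∈ A, μ₁ s) (hA₁1 : ∑ s ∈ A, μ₁ s < 1)
    (hA₂0 : 0 < ∑ s ∈ A, μ₂ s) (hA₂1 : ∑ s ∈ A, μ₂ s < 1)
    (δ₁ δ₂ : ℝ) (hδ₁ : δ₁ ∈ Set.Icc (0:ℝ) 1) :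
    (∀ x y₁ y₂ : X,
      u x ∈ Set.Icc (-1:ℝ) 1 → u y₁ ∈ Set.Icc (-1:ℝ) 1 → u y₂ ∈ Set.Icc (-1:ℝ) 1 →
      u y₁ < u x → u y₂ < u x →
      (∀ z : X,
        (∑ s, u (splice (fun _ => x) (fun _ => y₁) A s) * μ₁ s ≥ u z) ↔
        (∑ s, u (splice (fun _ => x) (fun _ => y₂) A s) * μ₂ s ≥ u z)) →
      (∀ z : X,
        ∑ s, u (splice (fun _ => x) (fun _ => y₁) A s) *
          (δ₁ * μ₁ s + (1 - δ₁) * bayes μ₁ A s) ≥ u z →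
        ∑ s, u (splice (fun _ => x) (fun _ => y₂) A s) *
          (δ₂ * μ₂ s + (1 - δ₂) * bayes μ₂ A s) ≥ u z)) ↔
    δ₁ ≥ δ₂ := by
  simp only [sum_splice_const_mul_of_sum_eq_one hμ₁1, sum_splice_const_mul_of_sum_eq_one hμ₂1,
    sum_splice_const_mul_mix_bayes hμ₁1 hA₁0, sum_splice_const_mul_mix_bayes hμ₂1 hA₂0]
  exact ⟨le_of_forall_shortfall hu hA₁0.le hA₁1 hA₂0.le hA₂1 hδ₁,
    forall_shortfall_of_le hu hA₁0.le hA₁1 hA₂0.le hA₂1⟩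

/-- Proposition 3: agent 1 is more conservative than agent 2 at A if and only if
δ₁(A) ≥ δ₂(A). -/
theorem stmt12 {S X : Type*} [Fintype S] [DecidableEq S] [Nonempty S]
    (μ₁ μ₂ : S → ℝ)
    (hμ₁0 : ∀ s, 0 ≤ μ₁ s) (hμ₁1 : ∑ s, μ₁ s = 1)
    (hμ₂0 : ∀ s, 0 ≤ μ₂ s) (hμ₂1 : ∑ s, μ₂ s = 1)
    (u : X → ℝ) (hu : Set.Icc (-1:ℝ) 1 ⊆ Set.range u)
    (A : Finset S)
    (hA₁0 : 0 < ∑ s ∈ A, μ₁ s) (hA₁1 : ∑ s ∈ A, μ₁ s < 1)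
    (hA₂0 : 0 < ∑ s ∈ A, μ₂ s) (hA₂1 : ∑ s ∈ A, μ₂ s < 1)
    (δ₁ δ₂ : ℝ) (hδ₁ : δ₁ ∈ Set.Icc (0:ℝ) 1) (hδ₂ : δ₂ ∈ Set.Icc (0:ℝ) 1) :
    (∀ x y₁ y₂ : X,
      u x ∈ Set.Icc (-1:ℝ) 1 → u y₁ ∈ Set.Icc (-1:ℝ) 1 → u y₂ ∈ Set.Icc (-1:ℝ) 1 →
      u y₁ < u x → u y₂ < u x →
      (∀ z : X,
        (∑ s, u (splice (fun _ => x) (fun _ => y₁) A s) * μ₁ s ≥ u z) ↔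
        (∑ s, u (splice (fun _ => x) (fun _ => y₂) A s) * μ₂ s ≥ u z)) →
      (∀ z : X,
        ∑ s, u (splice (fun _ => x) (fun _ => y₁) A s) *
          (δ₁ * μ₁ s + (1 - δ₁) * bayes μ₁ A s) ≥ u z →
        ∑ s, u (splice (fun _ => x) (fun _ => y₂) A s) *
          (δ₂ * μ₂ s + (1 - δ₂) * bayes μ₂ A s) ≥ u z)) ↔
    δ₁ ≥ δ₂ :=
  stmt12_general μ₁ μ₂ hμ₁1 hμ₂1 u hu A hA₁0 hA₁1 hA₂0 hA₂1 δ₁ δ₂ hδ₁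
end

section
/- Let M be a nonempty compact convex set of beliefs on a nonempty finite set S with μ(A) > 0 for every μ ∈ M, let M_A be a nonempty set of beliefs on S, and let u : X → ℝ with [−1,1] contained in the range of u. Assume Unambiguous Dynamic Conservatism: for all acts f, g, if ∑_{s∈S} u(f(s))μ(s) ≥ ∑_{s∈S} u(g(s))μ(s) for every μ ∈ M and ∑_{s∈S} u((fAg)(s))μ(s) ≥ ∑_{s∈S} u(g(s))μ(s) for every μ ∈ M, then ∑_{s∈S} u(f(s))π(s) ≥ ∑_{s∈S} u(g(s))π(s) for every π ∈ M_A. Then M_A is contained in the convex hull of M ∪ B(M,A), where B(M,A) = {B(μ,A) : μ ∈ M}. (Sufficiency direction of Theorem 2.) -/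
open Finset

/-!
If π ∈ M_A lay outside C = conv(M ∪ B(M,A)), which is compact because M and B(M,A) are compact
and convex, some d : S → ℝ would satisfy d·π < 0 < d·ν for all beliefs ν ∈ M ∪ B(M,A).
Since u takes all values in [-1,1], a positive multiple of d is the utility profile of an act f;
let g have utility 0 everywhere. Then f beats g under every μ ∈ M, and so does fAg, because its
expected utility under μ is μ(A) times that of f under B(μ,A). By Unambiguous Dynamic
Conservatism f then beats g under π, i.e. d·π ≥ 0, a contradiction.
-/

lemma isCompact_convexJoin {E : Type*} [AddCommGroup E] [Module ℝ E] [TopologicalSpace E]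
    [IsTopologicalAddGroup E] [ContinuousSMul ℝ E] {s t : Set E}
    (hs : IsCompact s) (ht : IsCompact t) : IsCompact (convexJoin ℝ s t) := by
  have : convexJoin ℝ s t = (fun p : ℝ × E × E => (1 - p.1) • p.2.1 + p.1 • p.2.2) ''
      (Set.Icc 0 1 ×ˢ s ×ˢ t) := by
    ext x
    simp only [mem_convexJoin, segment_eq_image, Set.mem_image, Set.mem_prod, Prod.exists]
    aesop
  rw [this]
  exact (isCompact_Icc.prod (hs.prod ht)).image (by fun_prop)

section

variable {S : Type*} [DecidableEq S]

lemma bayes_of_mem {μ : S → ℝ} {A : Finset S} {s : S} (hs : s ∈ A) :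
    bayes μ A s = μ s / ∑ t ∈ A, μ t :=
  if_pos hs

lemma bayes_of_notMem {μ : S → ℝ} {A : Finset S} {s : S} (hs : s ∉ A) : bayes μ A s = 0 :=
  if_neg hs

lemma dotProduct_bayes [Fintype S] (x μ : S → ℝ) (A : Finset S) :
    x ⬝ᵥ bayes μ A = (∑ s ∈ A, x s * μ s) / ∑ s ∈ A, μ s := by
  simp only [dotProduct, bayes, mul_ite, mul_zero, sum_ite_mem, univ_inter, sum_div, mul_div_assoc]

lemma sum_bayes [Fintype S] {μ : S → ℝ} {A : Finset S} (hμA : ∑ s ∈ A, μ s ≠ 0) :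
    ∑ s, bayes μ A s = 1 := by
  simpa [dotProduct, hμA] using dotProduct_bayes 1 μ A

lemma continuousOn_bayes (A : Finset S) :
    ContinuousOn (fun μ : S → ℝ => bayes μ A) {μ | ∑ s ∈ A, μ s ≠ 0} := by
  refine continuousOn_pi.2 fun s => ?_
  unfold bayes
  split_ifs
  · exact (continuous_apply s).continuousOn.div
      (continuous_finsetSum A fun t _ => continuous_apply t).continuousOn fun _ hμ => hμ
  · exact continuousOn_const

lemma Convex.bayes_image {M : Set (S → ℝ)} (hM : Convex ℝ M) {A : Finset S}
    (hA : ∀ μ ∈ M, 0 < ∑ s ∈ A, μ s) : Convex ℝ ((bayes · A) '' M) := by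
  rintro _ ⟨μ, hμ, rfl⟩ _ ⟨ν, hν, rfl⟩ p q hp hq hpq
  have ha := hA μ hμ
  have hb := hA ν hν
  set a := ∑ s ∈ A, μ s with ha_def
  set b := ∑ s ∈ A, ν s with hb_def
  have hD : 0 < p * b + q * a := by
    rcases hp.eq_or_lt with rfl | hp
    · simp_all
    · positivity
  -- Mixing μ and ν in the ratio p b : q a mixes their Bayesian updates in the ratio p : q.
  refine ⟨(p * b / (p * b + q * a)) • μ + (q * a / (p * b + q * a)) • ν,
    hM hμ hν (by positivity) (by positivity) (by field_simp), ?_⟩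
  have hκA : ∑ s ∈ A, (p * b / (p * b + q * a) * μ s + q * a / (p * b + q * a) * ν s) =
      a * b / (p * b + q * a) := by
    rw [sum_add_distrib, ← mul_sum, ← mul_sum]
    field_simp
    linear_combination a * b * hpq
  funext s
  by_cases hs : s ∈ A
  · simp only [bayes_of_mem hs, Pi.add_apply, Pi.smul_apply, smul_eq_mul, hκA, ← ha_def, ← hb_def]
    field_simp
  · simp [bayes_of_notMem hs]

end

section

variable {S : Type*} [Fintype S]

lemma exists_dotProduct_neg_of_notMem {C : Set (S → ℝ)} (hconv : Convex ℝ C)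
    (hclosed : IsClosed C) {π : S → ℝ} (hπ : ∑ s, π s = 1) (hπC : π ∉ C) :
    ∃ d : S → ℝ, d ⬝ᵥ π < 0 ∧ ∀ ν ∈ C, ∑ s, ν s = 1 → 0 < d ⬝ᵥ ν := by
  classical
  obtain ⟨φ, c, hφπ, hφC⟩ := geometric_hahn_banach_point_closed hconv hclosed hπC
  set d : S → ℝ := fun s => φ (fun t => if s = t then 1 else 0) - c
  have hd : ∀ ν, d ⬝ᵥ ν = φ ν - c * ∑ s, ν s := fun ν => by
    rw [← ContinuousLinearMap.coe_coe, LinearMap.pi_apply_eq_sum_univ]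
    simp only [d, dotProduct, smul_eq_mul, mul_sub, sum_sub_distrib, mul_sum, mul_comm,
      ContinuousLinearMap.coe_coe]
  refine ⟨d, ?_, fun ν hν hν1 => ?_⟩
  · rw [hd, hπ]
    linarith
  · rw [hd, hν1]
    linarith [hφC ν hν]

lemma exists_utility_eq_mul {X : Type*} {u : X → ℝ} (hu : Set.Icc (-1 : ℝ) 1 ⊆ Set.range u)
    (d : S → ℝ) : ∃ f : S → X, ∃ r > 0, ∀ s, u (f s) = r * d s := by
  have hr : 0 < ‖d‖ + 1 := by positivity
  have hmem : ∀ s, (‖d‖ + 1)⁻¹ * d s ∈ Set.Icc (-1 : ℝ) 1 := fun s => by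
    rw [Set.mem_Icc, ← abs_le, abs_mul, abs_inv, abs_of_pos hr, inv_mul_le_iff₀ hr]
    linarith [norm_le_pi_norm d s, Real.norm_eq_abs (d s)]
  choose f hf using fun s => hu (hmem s)
  exact ⟨f, _, inv_pos.2 hr, hf⟩

end

lemma sum_mul_splice {S X : Type*} [Fintype S] [DecidableEq S] (u : X → ℝ) (f g : S → X)
    (A : Finset S) (μ : S → ℝ) :
    ∑ s, u (splice f g A s) * μ s = ∑ s ∈ A, u (f s) * μ s + ∑ s ∈ Aᶜ, u (g s) * μ s := by
  simp only [splice, apply_ite u, ite_mul]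
  rw [sum_ite, filter_mem_eq_inter, univ_inter, filter_not, filter_mem_eq_inter, univ_inter,
    compl_eq_univ_sdiff]

theorem stmt14_general {S X : Type*} [Fintype S] [DecidableEq S]
    (M MA : Set (S → ℝ)) (hM : M.Nonempty)
    (hMcompact : IsCompact M) (hMconvex : Convex ℝ M)
    (hMb : ∀ μ ∈ M, (∀ s, 0 ≤ μ s) ∧ ∑ s, μ s = 1)
    (hMAb : ∀ π ∈ MA, (∀ s, 0 ≤ π s) ∧ ∑ s, π s = 1)
    (u : X → ℝ) (hu : Set.Icc (-1:ℝ) 1 ⊆ Set.range u)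
    (A : Finset S) (hA : ∀ μ ∈ M, 0 < ∑ s ∈ A, μ s)
    (hUDC : ∀ f g : S → X,
      (∀ μ ∈ M, ∑ s, u (f s) * μ s ≥ ∑ s, u (g s) * μ s) →
      (∀ μ ∈ M, ∑ s, u (splice f g A s) * μ s ≥ ∑ s, u (g s) * μ s) →
      ∀ π ∈ MA, ∑ s, u (f s) * π s ≥ ∑ s, u (g s) * π s) :
    MA ⊆ convexHull ℝ (M ∪ (fun μ => bayes μ A) '' M) := by
  intro π hπ
  by_contra hπC
  have hBM : IsCompact ((bayes · A) '' M) :=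
    hMcompact.image_of_continuousOn ((continuousOn_bayes A).mono fun μ hμ => (hA μ hμ).ne')
  have hC : IsClosed (convexHull ℝ (M ∪ (bayes · A) '' M)) := by
    rw [convexHull_union hM (hM.image _), hMconvex.convexHull_eq,
      (hMconvex.bayes_image hA).convexHull_eq]
    exact (isCompact_convexJoin hMcompact hBM).isClosed
  obtain ⟨d, hdπ, hdC⟩ :=
    exists_dotProduct_neg_of_notMem (convex_convexHull ℝ _) hC (hMAb π hπ).2 hπC
  have hdM : ∀ μ ∈ M, 0 < d ⬝ᵥ μ := fun μ hμ =>
    hdC μ (subset_convexHull ℝ _ (.inl hμ)) (hMb μ hμ).2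
  have hdB : ∀ μ ∈ M, 0 < d ⬝ᵥ bayes μ A := fun μ hμ =>
    hdC _ (subset_convexHull ℝ _ (.inr ⟨μ, hμ, rfl⟩)) (sum_bayes (hA μ hμ).ne')
  obtain ⟨f, r, hr, hf⟩ := exists_utility_eq_mul hu d
  obtain ⟨z, hz⟩ := hu (⟨by norm_num, by norm_num⟩ : (0 : ℝ) ∈ Set.Icc (-1) 1)
  have hf_sum : ∀ ν : S → ℝ, ∑ s, u (f s) * ν s = r * d ⬝ᵥ ν := fun ν => by
    simp only [hf, dotProduct, mul_sum, mul_assoc]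
  have hg_sum : ∀ B : Finset S, ∀ ν : S → ℝ, ∑ s ∈ B, u z * ν s = 0 := by
    simp [hz]
  have hUDC_π := hUDC f (fun _ => z) (fun μ hμ => ?_) (fun μ hμ => ?_) π hπ
  · rw [hf_sum, hg_sum] at hUDC_π
    exact (mul_neg_of_pos_of_neg hr hdπ).not_ge hUDC_π
  · rw [hf_sum, hg_sum]
    exact (mul_pos hr (hdM μ hμ)).le
  · have hdμA := dotProduct_bayes d μ A
    rw [eq_div_iff (hA μ hμ).ne'] at hdμA
    rw [sum_mul_splice, hg_sum, hg_sum, add_zero]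
    simp only [hf, mul_assoc, ← mul_sum, ← hdμA]
    exact (mul_pos hr (mul_pos (hdB μ hμ) (hA μ hμ))).le

/-- Sufficiency direction of Theorem 2: Unambiguous Dynamic Conservatism implies
the posterior belief set lies in conv(M ∪ B(M,A)). -/
theorem stmt14 {S X : Type*} [Fintype S] [DecidableEq S] [Nonempty S]
    (M MA : Set (S → ℝ)) (hM : M.Nonempty) (hMA : MA.Nonempty)
    (hMcompact : IsCompact M) (hMconvex : Convex ℝ M)
    (hMb : ∀ μ ∈ M, (∀ s, 0 ≤ μ s) ∧ ∑ s, μ s = 1)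
    (hMAb : ∀ π ∈ MA, (∀ s, 0 ≤ π s) ∧ ∑ s, π s = 1)
    (u : X → ℝ) (hu : Set.Icc (-1:ℝ) 1 ⊆ Set.range u)
    (A : Finset S) (hA : ∀ μ ∈ M, 0 < ∑ s ∈ A, μ s)
    (hUDC : ∀ f g : S → X,
      (∀ μ ∈ M, ∑ s, u (f s) * μ s ≥ ∑ s, u (g s) * μ s) →
      (∀ μ ∈ M, ∑ s, u (splice f g A s) * μ s ≥ ∑ s, u (g s) * μ s) →
      ∀ π ∈ MA, ∑ s, u (f s) * π s ≥ ∑ s, u (g s) * π s) :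
    MA ⊆ convexHull ℝ (M ∪ (fun μ => bayes μ A) '' M) :=
  stmt14_general M MA hM hMcompact hMconvex hMb hMAb u hu A hA hUDC
end
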